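/- Let V be a finite-dimensional real vector space and L ⊆ 𝕋_ℂV a lagrangian subspace. With E := pr_{V_ℂ}(L), ε ∈ Λ²E* the unique form with L = L(E,ε), Δ := (E ∩ Ē) ∩ V, D := (E + Ē) ∩ V, ω_Δ := Im(ε|_{Δ×Δ}), Δ₀ := {X ∈ Δ : ω_Δ(X,·) = 0}, and Ann(D) := {α ∈ V* : α|_D = 0}, there exists a real form B ∈ Λ²V* such that the real part K' of e^B L ∩ conj(e^B L) splits as K' = Δ₀ ⊕ Ann(D) ⊆ V ⊕ V* = 𝕋V. -/

import Mathlib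

open TensorProduct Module

noncomputable section

namespace CDirac


/-- The real generalized tangent space `V ⊕ V*`. -/
abbrev TR (V : Type*) [AddCommGroup V] [Module ℝ V] := V × (V →ₗ[ℝ] ℝ)

variable {V : Type*} [AddCommGroup V] [Module ℝ V]

/-- The canonical pairing `⟨X+ξ, Y+η⟩ = (η X + ξ Y)/2` on `𝕋V`. -/
def pairR (a b : TR V) : ℝ := (b.2 a.1 + a.2 b.1) / 2

lemma pairR_add_left (a a' b : TR V) : pairR (a + a') b = pairR a b + pairR a' b := by
  simp only [pairR, Prod.fst_add, Prod.snd_add, map_add, LinearMap.add_apply]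
  ring

lemma pairR_smul_left (c : ℝ) (a b : TR V) : pairR (c • a) b = c * pairR a b := by
  simp only [pairR, Prod.smul_fst, Prod.smul_snd, map_smul, LinearMap.smul_apply,
    smul_eq_mul]
  ring

/-- Orthogonal complement with respect to the pairing on `𝕋V`. -/
def orthR (L : Submodule ℝ (TR V)) : Submodule ℝ (TR V) where
  carrier := {a | ∀ b ∈ L, pairR a b = 0}
  zero_mem' := fun b _ => by simp [pairR]
  add_mem' := fun {a a'} ha ha' b hb => by
    rw [pairR_add_left, ha b hb, ha' b hb, add_zero]
  smul_mem' := fun c a ha b hb => by rw [pairR_smul_left, ha b hb, mul_zero]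

/-- A real lagrangian subspace: `L = L^⊥`. -/
def IsLagrangianR (L : Submodule ℝ (TR V)) : Prop := L = orthR L

/-- An isotropic subspace of `𝕋V`. -/
def IsIsotropicR (K : Submodule ℝ (TR V)) : Prop := ∀ a ∈ K, ∀ b ∈ K, pairR a b = 0

/-- The quotient `K^⊥/K`. -/
abbrev quotK (K : Submodule ℝ (TR V)) :=
  @HasQuotient.Quotient ↥(orthR K) _ Submodule.hasQuotient (K.comap (orthR K).subtype)

/-- The quotient map `K^⊥ → K^⊥/K`. -/
def mkK (K : Submodule ℝ (TR V)) : ↥(orthR K) →ₗ[ℝ] quotK K :=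
  @Submodule.mkQ ℝ ↥(orthR K) _ (Submodule.addCommGroup _) (Submodule.module _)
    (K.comap (orthR K).subtype)




/-- The complexification `V_ℂ = ℂ ⊗_ℝ V`. -/
abbrev Cx (V : Type*) [AddCommGroup V] [Module ℝ V] := ℂ ⊗[ℝ] V

/-- The complex dual `(V_ℂ)^*`. -/
abbrev DualC (V : Type*) [AddCommGroup V] [Module ℝ V] := Cx V →ₗ[ℂ] ℂ

/-- The complexified generalized tangent space `𝕋_ℂ V = V_ℂ ⊕ (V_ℂ)^*`. -/
abbrev TCx (V : Type*) [AddCommGroup V] [Module ℝ V] := Cx V × DualC V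

/-- The ℂ-bilinear pairing on `𝕋_ℂ V`. -/
def pairC (a b : TCx V) : ℂ := (b.2 a.1 + a.2 b.1) / 2

lemma pairC_add_left (a a' b : TCx V) : pairC (a + a') b = pairC a b + pairC a' b := by
  simp only [pairC, Prod.fst_add, Prod.snd_add, map_add, LinearMap.add_apply]
  ring

lemma pairC_smul_left (c : ℂ) (a b : TCx V) : pairC (c • a) b = c * pairC a b := by
  simp only [pairC, Prod.smul_fst, Prod.smul_snd, map_smul, LinearMap.smul_apply,
    smul_eq_mul]
  ring

/-- Orthogonal complement with respect to the ℂ-bilinear pairing on `𝕋_ℂ V`. -/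
def orthC (L : Submodule ℂ (TCx V)) : Submodule ℂ (TCx V) where
  carrier := {a | ∀ b ∈ L, pairC a b = 0}
  zero_mem' := fun b _ => by simp [pairC]
  add_mem' := fun {a a'} ha ha' b hb => by
    rw [pairC_add_left, ha b hb, ha' b hb, add_zero]
  smul_mem' := fun c a ha b hb => by rw [pairC_smul_left, ha b hb, mul_zero]

/-- A complex lagrangian subspace: `L = L^⊥`. -/
def IsLagrangianC (L : Submodule ℂ (TCx V)) : Prop := L = orthC L

private lemma conjCxAux_smul (z : ℂ) (x : Cx V) :
    TensorProduct.map Complex.conjAe.toLinearMap LinearMap.id (z • x) =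
      starRingEnd ℂ z • TensorProduct.map Complex.conjAe.toLinearMap LinearMap.id x := by
  induction x using TensorProduct.induction_on with
  | zero => simp
  | tmul w v => simp [smul_tmul', smul_eq_mul, Complex.conjAe_coe, map_mul]
  | add x y hx hy => simp only [smul_add, map_add, hx, hy]

/-- Conjugation on `V_ℂ`, as a `conj`-semilinear map. -/
def conjCx : Cx V →ₛₗ[starRingEnd ℂ] Cx V where
  toFun := TensorProduct.map Complex.conjAe.toLinearMap LinearMap.id
  map_add' := map_add _
  map_smul' := conjCxAux_smul

lemma conjCx_smul (z : ℂ) (x : Cx V) :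
    conjCx (z • x) = starRingEnd ℂ z • conjCx x := conjCxAux_smul z x

/-- Conjugation of a complex linear functional. -/
def conjDualFun (ξ : DualC V) : DualC V where
  toFun x := starRingEnd ℂ (ξ (conjCx x))
  map_add' x y := by simp
  map_smul' z x := by
    rw [conjCx_smul, map_smul, smul_eq_mul, map_mul, RingHom.id_apply]
    simp [smul_eq_mul]

/-- Conjugation on `(V_ℂ)^*`, as a `conj`-semilinear map. -/
def conjDual : DualC V →ₛₗ[starRingEnd ℂ] DualC V where
  toFun := conjDualFun
  map_add' ξ η := by ext x; simp [conjDualFun]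
  map_smul' z ξ := by
    ext x
    simp [conjDualFun, smul_eq_mul, map_mul]

/-- Conjugation on `𝕋_ℂ V`, as a `conj`-semilinear map. -/
def conjT : TCx V →ₛₗ[starRingEnd ℂ] TCx V where
  toFun a := (conjCx a.1, conjDual a.2)
  map_add' a b := by simp [Prod.ext_iff]
  map_smul' z a := by
    simp [Prod.ext_iff, Prod.smul_fst, Prod.smul_snd, map_smulₛₗ]

instance : RingHomSurjective (starRingEnd ℂ) :=
  ⟨fun z => ⟨starRingEnd ℂ z, by simp⟩⟩

/-- The conjugate `L̄` of a ℂ-subspace of `𝕋_ℂ V`. -/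
def conjSub (L : Submodule ℂ (TCx V)) : Submodule ℂ (TCx V) := L.map conjT

/-- The conjugate `Ē` of a ℂ-subspace of `V_ℂ`. -/
def conjE (E : Submodule ℂ (Cx V)) : Submodule ℂ (Cx V) := E.map conjCx

/-- The canonical inclusion `V → V_ℂ`, `v ↦ 1 ⊗ v`. -/
def iV : V →ₗ[ℝ] Cx V := TensorProduct.mk ℝ ℂ V 1





/-- ℝ-linear auxiliary version of the ℂ-linear extension of a real functional. -/
def dualExtAux (α : V →ₗ[ℝ] ℝ) : Cx V →ₗ[ℝ] ℂ :=
  TensorProduct.lift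
    (LinearMap.mk₂ ℝ (fun z v => z * (α v : ℂ))
      (fun z w v => by push_cast; ring)
      (fun r z v => by simp only [Complex.real_smul]; ring)
      (fun z v w => by push_cast [map_add]; ring)
      (fun r z v => by simp only [map_smul, smul_eq_mul, Complex.real_smul]; push_cast; ring))

private lemma dualExtAux_smulC (α : V →ₗ[ℝ] ℝ) (z : ℂ) (x : Cx V) :
    dualExtAux α (z • x) = z * dualExtAux α x := by
  induction x using TensorProduct.induction_on with
  | zero => simp
  | tmul w v =>
      simp only [dualExtAux, smul_tmul', lift.tmul, LinearMap.mk₂_apply, smul_eq_mul]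
      ring
  | add x y hx hy => simp only [smul_add, map_add, hx, hy]; ring

/-- The ℂ-linear extension of a real functional `α : V → ℝ` to `V_ℂ`. -/
def dualExtFun (α : V →ₗ[ℝ] ℝ) : DualC V where
  toFun := dualExtAux α
  map_add' := map_add _
  map_smul' z x := by simpa using dualExtAux_smulC α z x

private lemma dualExtFun_tmul (α : V →ₗ[ℝ] ℝ) (z : ℂ) (v : V) :
    dualExtFun α (z ⊗ₜ[ℝ] v) = z * (α v : ℂ) := by
  simp [dualExtFun, dualExtAux]

/-- The ℂ-linear extension map `V^* → (V_ℂ)^*`, as an ℝ-linear map. -/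
def dualExt : (V →ₗ[ℝ] ℝ) →ₗ[ℝ] DualC V where
  toFun := dualExtFun
  map_add' α β := by
    apply LinearMap.ext; intro x
    induction x using TensorProduct.induction_on with
    | zero => simp
    | tmul w v =>
        simp only [dualExtFun_tmul, LinearMap.add_apply]
        push_cast
        ring
    | add x y hx hy =>
        simp only [map_add, LinearMap.add_apply] at *
        rw [hx, hy]
  map_smul' r α := by
    apply LinearMap.ext; intro x
    induction x using TensorProduct.induction_on with
    | zero => simp
    | tmul w v =>
        simp only [dualExtFun_tmul, RingHom.id_apply, LinearMap.smul_apply,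
          LinearMap.smul_apply, smul_eq_mul, Complex.real_smul]
        push_cast
        ring
    | add x y hx hy =>
        simp only [map_add, RingHom.id_apply, LinearMap.smul_apply, smul_eq_mul] at *
        rw [hx, hy]

/-- The canonical inclusion `𝕋V → 𝕋_ℂV`. -/
def iT : TR V →ₗ[ℝ] TCx V where
  toFun a := (iV a.1, dualExt a.2)
  map_add' a b := by simp [Prod.ext_iff]
  map_smul' r a := by simp [Prod.ext_iff]



/-- Auxiliary ℝ-linear version of the ℂ-bilinear extension of a real bilinear form. -/
def bilinExtAux (B : V →ₗ[ℝ] V →ₗ[ℝ] ℝ) : Cx V →ₗ[ℝ] DualC V :=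
  TensorProduct.lift
    (LinearMap.mk₂ ℝ (fun z v => z • dualExt (B v))
      (fun z w v => by simp only [add_smul])
      (fun r z v => by simp only [smul_assoc])
      (fun z v w => by simp only [map_add, smul_add])
      (fun r z v => by simp only [map_smul]; exact smul_comm z r _))

private lemma bilinExtAux_smulC (B : V →ₗ[ℝ] V →ₗ[ℝ] ℝ) (z : ℂ) (x : Cx V) :
    bilinExtAux B (z • x) = z • bilinExtAux B x := by
  induction x using TensorProduct.induction_on with
  | zero => simp
  | tmul w v =>
      simp only [bilinExtAux, smul_tmul', lift.tmul, LinearMap.mk₂_apply, smul_eq_mul,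
        mul_smul]
  | add x y hx hy => simp only [smul_add, map_add, hx, hy]

/-- The ℂ-bilinear extension of a real bilinear form `B : V × V → ℝ` to `V_ℂ`. -/
def bilinExt (B : V →ₗ[ℝ] V →ₗ[ℝ] ℝ) : Cx V →ₗ[ℂ] DualC V where
  toFun := bilinExtAux B
  map_add' := map_add _
  map_smul' z x := by simpa using bilinExtAux_smulC B z x

/-- The `B`-transformation `e^B(X+ξ) = X + ξ + B̃(X,·)` of `𝕋_ℂV`, for a real `B`. -/
def eB (B : V →ₗ[ℝ] V →ₗ[ℝ] ℝ) : TCx V →ₗ[ℂ] TCx V where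
  toFun a := (a.1, a.2 + bilinExt B a.1)
  map_add' a b := by
    simp only [Prod.fst_add, Prod.snd_add, map_add, Prod.mk_add_mk, Prod.mk.injEq]
    exact ⟨trivial, by abel⟩
  map_smul' z a := by
    simp only [Prod.smul_fst, Prod.smul_snd, map_smul, RingHom.id_apply, Prod.smul_mk,
      Prod.mk.injEq, smul_add]

/-- The real `B`-transformation `e^B(X+α) = X + α + B(X,·)` of `𝕋V`. -/
def eBR (B : V →ₗ[ℝ] V →ₗ[ℝ] ℝ) : TR V →ₗ[ℝ] TR V where
  toFun a := (a.1, a.2 + B a.1)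
  map_add' a b := by
    simp only [Prod.fst_add, Prod.snd_add, map_add, Prod.mk_add_mk, Prod.mk.injEq]
    exact ⟨trivial, by abel⟩
  map_smul' r a := by
    simp only [Prod.smul_fst, Prod.smul_snd, map_smul, RingHom.id_apply, Prod.smul_mk,
      Prod.mk.injEq, smul_add]


/-- The range `E = pr_{V_ℂ}(L)` of a subspace of `𝕋_ℂV`. -/
def Esub (L : Submodule ℂ (TCx V)) : Submodule ℂ (Cx V) :=
  L.map (LinearMap.fst ℂ (Cx V) (DualC V))

/-- The real index `r = dim_ℂ (L ∩ L̄)`. -/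
def riL (L : Submodule ℂ (TCx V)) : ℕ := finrank ℂ ↥(L ⊓ conjSub L)

/-- The real part `K = (L ∩ L̄) ∩ 𝕋V`, as a subspace of `𝕋V`. -/
def Ksub (L : Submodule ℂ (TCx V)) : Submodule ℝ (TR V) :=
  ((L ⊓ conjSub L).restrictScalars ℝ).comap iT

/-- The distribution `D = (E + Ē) ∩ V`, as a subspace of `V`. -/
def Dsub (L : Submodule ℂ (TCx V)) : Submodule ℝ V :=
  ((Esub L ⊔ conjE (Esub L)).restrictScalars ℝ).comap iV

/-- The distribution `Δ = (E ∩ Ē) ∩ V`, as a subspace of `V`. -/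
def DeltaSub (L : Submodule ℂ (TCx V)) : Submodule ℝ V :=
  ((Esub L ⊓ conjE (Esub L)).restrictScalars ℝ).comap iV

/-- The order `s = dim V - dim D`. -/
def orderL (L : Submodule ℂ (TCx V)) : ℕ := finrank ℝ V - finrank ℝ ↥(Dsub L)

/-- The (normalized) type `k = dim_ℂ(E + Ē) - dim_ℂ E`. -/
def typeL (L : Submodule ℂ (TCx V)) : ℕ :=
  finrank ℂ ↥(Esub L ⊔ conjE (Esub L)) - finrank ℂ ↥(Esub L)


end CDirac

/-!
Choose a real-linear section `s : D → E` of `Re : E → D`. If `X ∈ Δ₀`, then `ε(X, ·)` is real on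
the real points of `E`, hence `Re ε(X, z)` depends only on `Re z`, and a real covector `γ`
satisfies `X + γ ∈ L` iff `γ = Re ε(X, s ·)` on `D`. Conversely `X + γ ∈ L` with `X` real forces
`X ∈ Δ₀`, since `ε(X, Y) = γ(Y)` is real for real `Y ∈ E`. The form `(X, Y) ↦ -Re ε(X, sY)` is
alternating on `Δ₀` (because `Re ε(X, sX) = Re ε(X, X) = 0`), so it extends to a real two-form
`B` on `V`, and then `X + α ∈ e^B L` iff `X + (α - B(X, ·)) ∈ L` iff `X ∈ Δ₀` and `α|_D = 0`.
-/

namespace LinearMap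

variable {K M N : Type*} [Field K] [AddCommGroup M] [Module K M] [AddCommGroup N] [Module K N]

theorem exists_rightInverse_on_range (f : M →ₗ[K] N) :
    ∃ g : N →ₗ[K] M, ∀ y ∈ range f, f (g y) = y := by
  obtain ⟨g₀, hg₀⟩ := f.rangeRestrict.exists_rightInverse_of_surjective f.range_rangeRestrict
  obtain ⟨g, rfl⟩ := LinearMap.exists_extend g₀
  exact ⟨g, fun y hy => congrArg Subtype.val (LinearMap.congr_fun hg₀ ⟨y, hy⟩)⟩

theorem apply_eq_neg_flip_of_isAlt_on {W : Submodule K M} {φ : M →ₗ[K] M →ₗ[K] K}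
    (hφ : ∀ x ∈ W, φ x x = 0) {x y : M} (hx : x ∈ W) (hy : y ∈ W) : φ x y = -φ y x := by
  have h := hφ (x + y) (add_mem hx hy)
  simp only [map_add, add_apply, hφ x hx, hφ y hy] at h
  linear_combination h

theorem exists_isAlt_extension (W : Submodule K M) (φ : M →ₗ[K] M →ₗ[K] K)
    (hφ : ∀ x ∈ W, φ x x = 0) :
    ∃ B : M →ₗ[K] M →ₗ[K] K, (∀ v, B v v = 0) ∧ ∀ x ∈ W, ∀ y, B x y = φ x y := by
  set p : M →ₗ[K] M := W.subtype ∘ₗ W.subtype.leftInverse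
  have hpW : ∀ v, p v ∈ W := fun v => (W.subtype.leftInverse v).2
  have hp : ∀ x ∈ W, p x = x := fun x hx =>
    congrArg Subtype.val (leftInverse_apply_of_inj W.ker_subtype ⟨x, hx⟩)
  set φp : M →ₗ[K] M →ₗ[K] K := φ ∘ₗ p
  refine ⟨φp - φp.flip - φ.compl₁₂ p p, fun v => ?_, fun x hx y => ?_⟩
  · simp [φp, hφ _ (hpW v)]
  · simp only [φp, sub_apply, flip_apply, comp_apply, compl₁₂_apply, hp x hx,
      apply_eq_neg_flip_of_isAlt_on hφ hx (hpW y)]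
    ring

theorem exists_extend₂ {W : Submodule K M} (ε : W →ₗ[K] W →ₗ[K] K) :
    ∃ εx : M →ₗ[K] M →ₗ[K] K, ∀ x y : W, εx x y = ε x y := by
  refine ⟨ε.compl₁₂ W.subtype.leftInverse W.subtype.leftInverse, fun x y => ?_⟩
  simp only [compl₁₂_apply]
  rw [← W.subtype_apply x, ← W.subtype_apply y, leftInverse_apply_of_inj W.ker_subtype,
    leftInverse_apply_of_inj W.ker_subtype]

end LinearMap

namespace CDirac

variable {V : Type*} [AddCommGroup V] [Module ℝ V]

open Complex ComplexConjugate

lemma conjCx_tmul (z : ℂ) (v : V) : conjCx (z ⊗ₜ[ℝ] v) = conj z ⊗ₜ[ℝ] v := by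
  simp [conjCx, Complex.conjAe_coe]

lemma conjCx_iV (v : V) : conjCx (iV v) = iV v := by
  simp [iV, conjCx_tmul]

def reP : Cx V →ₗ[ℝ] V :=
  TensorProduct.lift (LinearMap.smulRight reLm LinearMap.id).flip.flip

def imP : Cx V →ₗ[ℝ] V :=
  TensorProduct.lift (LinearMap.smulRight imLm LinearMap.id).flip.flip

@[simp] lemma reP_tmul (z : ℂ) (v : V) : reP (z ⊗ₜ[ℝ] v) = z.re • v := rfl

@[simp] lemma imP_tmul (z : ℂ) (v : V) : imP (z ⊗ₜ[ℝ] v) = z.im • v := rfl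

@[simp] lemma reP_iV (v : V) : reP (iV v) = v := by simp [iV]

@[simp] lemma imP_iV (v : V) : imP (iV v) = 0 := by simp [iV]

lemma iV_reP_add_I_smul_iV_imP (x : Cx V) : iV (reP x) + I • iV (imP x) = x := by
  induction x using TensorProduct.induction_on with
  | zero => simp
  | tmul z v =>
    simp only [iV, TensorProduct.mk_apply, reP_tmul, imP_tmul, TensorProduct.tmul_smul,
      TensorProduct.smul_tmul', ← TensorProduct.add_tmul]
    congr 1
    apply Complex.ext <;> simp
  | add x y hx hy =>
    rw [map_add, map_add, map_add, map_add, smul_add]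
    nth_rewrite 3 [← hx]; nth_rewrite 3 [← hy]
    abel

lemma reP_conjCx (x : Cx V) : reP (conjCx x) = reP x := by
  induction x using TensorProduct.induction_on with
  | zero => simp
  | tmul z v => simp [conjCx_tmul]
  | add x y hx hy => rw [map_add, map_add, map_add, hx, hy]

lemma reP_I_smul (x : Cx V) : reP (I • x) = -imP x := by
  induction x using TensorProduct.induction_on with
  | zero => simp
  | tmul z v => simp [TensorProduct.smul_tmul', neg_smul]
  | add x y hx hy => rw [smul_add, map_add, map_add, hx, hy, neg_add]

lemma two_smul_iV_reP (x : Cx V) : (2 : ℂ) • iV (reP x) = x + conjCx x := by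
  induction x using TensorProduct.induction_on with
  | zero => simp
  | tmul z v =>
    simp only [iV, TensorProduct.mk_apply, reP_tmul, conjCx_tmul, TensorProduct.tmul_smul,
      TensorProduct.smul_tmul', ← TensorProduct.add_tmul]
    congr 1
    apply Complex.ext <;> simp [two_mul]
  | add x y hx hy =>
    rw [map_add, map_add, smul_add, hx, hy, map_add]
    abel

lemma I_smul_iV_imP_of_reP_eq_zero {x : Cx V} (hx : reP x = 0) : I • iV (imP x) = x := by
  simpa [hx] using iV_reP_add_I_smul_iV_imP x

lemma dualExt_tmul (α : V →ₗ[ℝ] ℝ) (z : ℂ) (v : V) :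
    dualExt α (z ⊗ₜ[ℝ] v) = z * α v := by
  simp [dualExt, dualExtFun, dualExtAux]

lemma dualExt_iV (α : V →ₗ[ℝ] ℝ) (v : V) : dualExt α (iV v) = α v := by
  simp [iV, dualExt_tmul]

lemma dualExt_apply (α : V →ₗ[ℝ] ℝ) (x : Cx V) :
    dualExt α x = α (reP x) + I * α (imP x) := by
  conv_lhs => rw [← iV_reP_add_I_smul_iV_imP x]
  rw [map_add, map_smul, dualExt_iV, dualExt_iV, smul_eq_mul]

lemma conjDual_dualExt (α : V →ₗ[ℝ] ℝ) : conjDual (dualExt α) = dualExt α := by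
  refine LinearMap.ext fun x => ?_
  induction x using TensorProduct.induction_on with
  | zero => simp
  | tmul z v => simp [conjDual, conjDualFun, conjCx_tmul, dualExt_tmul]
  | add x y hx hy => simp only [map_add, hx, hy]

lemma conjT_iT (a : TR V) : conjT (iT a) = iT a := by
  simp [conjT, iT, conjCx_iV, conjDual_dualExt]

lemma mem_Ksub_iff {M : Submodule ℂ (TCx V)} {a : TR V} : a ∈ Ksub M ↔ iT a ∈ M :=
  ⟨fun h => h.1, fun h => ⟨h, iT a, h, conjT_iT a⟩⟩

lemma bilinExt_iV (B : V →ₗ[ℝ] V →ₗ[ℝ] ℝ) (v : V) : bilinExt B (iV v) = dualExt (B v) := by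
  simp [bilinExt, bilinExtAux, iV]

lemma iT_mem_map_eB_iff {M : Submodule ℂ (TCx V)} (B : V →ₗ[ℝ] V →ₗ[ℝ] ℝ) (X : V)
    (α : V →ₗ[ℝ] ℝ) : iT (X, α) ∈ M.map (eB B) ↔ iT (X, α - B X) ∈ M := by
  have key : ∀ a : TCx V, eB B a = iT (X, α) ↔ a = iT (X, α - B X) := fun a => by
    simp only [eB, iT, LinearMap.coe_mk, AddHom.coe_mk, Prod.ext_iff]
    refine and_congr_right fun hX => ?_
    rw [hX, bilinExt_iV, map_sub, eq_sub_iff_add_eq]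
  simp only [Submodule.mem_map, key, exists_eq_right]

section RealPoints

variable {E : Submodule ℂ (Cx V)}

lemma iV_mem_conjE {v : V} (hv : iV v ∈ E) : iV v ∈ conjE E := ⟨iV v, hv, conjCx_iV v⟩

variable (E) in
lemma comap_iV_sup_conjE :
    ((E ⊔ conjE E).restrictScalars ℝ).comap iV = (E.restrictScalars ℝ).map reP := by
  ext v
  simp only [Submodule.mem_comap, Submodule.restrictScalars_mem, Submodule.mem_map]
  constructor
  · intro hv
    obtain ⟨a, ha, _, ⟨c, hc, rfl⟩, hac⟩ := Submodule.mem_sup.mp hv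
    refine ⟨a + c, add_mem ha hc, ?_⟩
    rw [map_add, ← reP_conjCx c, ← map_add, hac, reP_iV]
  · rintro ⟨y, hy, rfl⟩
    have h : iV (reP y) = (2 : ℂ)⁻¹ • (y + conjCx y) := by
      rw [← two_smul_iV_reP, smul_smul, inv_mul_cancel₀ two_ne_zero, one_smul]
    rw [h]
    exact Submodule.smul_mem _ _
      (add_mem (Submodule.mem_sup_left hy) (Submodule.mem_sup_right ⟨y, hy, rfl⟩))

lemma re_apply_eq_of_reP_eq {f : DualC V} (hf : ∀ Y, iV Y ∈ E → (f (iV Y)).im = 0)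
    {z z' : Cx V} (hz : z ∈ E) (hz' : z' ∈ E) (h : reP z = reP z') : (f z).re = (f z').re := by
  set w := imP (z - z')
  have hw : I • iV w = z - z' := I_smul_iV_imP_of_reP_eq_zero (by rw [map_sub, h, sub_self])
  have hwE : iV w ∈ E := by
    have : iV w = (-I) • (z - z') := by rw [← hw, smul_smul]; simp
    rw [this]
    exact E.smul_mem _ (sub_mem hz hz')
  have hfz : f z = f z' + I * f (iV w) := by
    rw [← smul_eq_mul, ← map_smul, hw, ← map_add, add_sub_cancel]
  simp [hfz, hf w hwE]

lemma dualExt_eqOn_iff_re (γ : V →ₗ[ℝ] ℝ) (f : DualC V) :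
    (∀ y ∈ E, dualExt γ y = f y) ↔ ∀ y ∈ E, γ (reP y) = (f y).re := by
  refine ⟨fun h y hy => by simp [← h y hy, dualExt_apply], fun h y hy => ?_⟩
  have him : γ (imP y) = (f y).im := by
    have := h ((-I) • y) (E.smul_mem _ hy)
    simpa [reP_I_smul] using this
  apply Complex.ext <;> simp [dualExt_apply, h y hy, him]

lemma dualExt_eqOn_iff_of_section {f : DualC V} (hf : ∀ Y, iV Y ∈ E → (f (iV Y)).im = 0)
    {s : V →ₗ[ℝ] Cx V} (hsE : ∀ v, s v ∈ E)
    (hs : ∀ v ∈ (E.restrictScalars ℝ).map reP, reP (s v) = v) (γ : V →ₗ[ℝ] ℝ) :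
    (∀ y ∈ E, dualExt γ y = f y) ↔ ∀ v ∈ (E.restrictScalars ℝ).map reP, γ v = (f (s v)).re := by
  rw [dualExt_eqOn_iff_re]
  constructor
  · intro h v hv
    rw [← h _ (hsE v), hs v hv]
  · intro h y hy
    have hyD : reP y ∈ (E.restrictScalars ℝ).map reP := ⟨y, hy, rfl⟩
    rw [h _ hyD]
    exact re_apply_eq_of_reP_eq hf (hsE _) hy (hs _ hyD)

variable (E) in
lemma exists_section_reP : ∃ s : V →ₗ[ℝ] Cx V,
    (∀ v, s v ∈ E) ∧ ∀ v ∈ (E.restrictScalars ℝ).map reP, reP (s v) = v := by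
  obtain ⟨s, hs⟩ := (reP ∘ₗ (E.restrictScalars ℝ).subtype).exists_rightInverse_on_range
  refine ⟨(E.restrictScalars ℝ).subtype ∘ₗ s, fun v => (s v).2, fun v hv => hs v ?_⟩
  rwa [LinearMap.range_comp, Submodule.range_subtype]

variable {L : Submodule ℂ (TCx V)} {εx : Cx V →ₗ[ℂ] Cx V →ₗ[ℂ] ℂ}

lemma iT_mem_iff_of_char {ε : E →ₗ[ℂ] E →ₗ[ℂ] ℂ}
    (hchar : ∀ a : TCx V, a ∈ L ↔ ∃ h : a.1 ∈ E, ∀ y : E, a.2 y = ε ⟨a.1, h⟩ y)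
    (hεx : ∀ x y : E, εx x y = ε x y) (X : V) (γ : V →ₗ[ℝ] ℝ) :
    iT (X, γ) ∈ L ↔ iV X ∈ E ∧ ∀ y ∈ E, dualExt γ y = εx (iV X) y := by
  simp only [hchar, iT, LinearMap.coe_mk, AddHom.coe_mk]
  constructor
  · rintro ⟨hX, h⟩
    exact ⟨hX, fun y hy => by rw [h ⟨y, hy⟩, ← hεx]⟩
  · rintro ⟨hX, h⟩
    exact ⟨hX, fun y => by rw [h y y.2, ← hεx]⟩

lemma Ksub_map_eB_eq {Δ₀ : Submodule ℝ V}
    (hL : ∀ X γ, iT (X, γ) ∈ L ↔ iV X ∈ E ∧ ∀ y ∈ E, dualExt γ y = εx (iV X) y)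
    (hΔ₀ : ∀ X, X ∈ Δ₀ ↔ iV X ∈ E ∧ ∀ Y, iV Y ∈ E → (εx (iV X) (iV Y)).im = 0)
    {s : V →ₗ[ℝ] Cx V} (hsE : ∀ v, s v ∈ E)
    (hs : ∀ v ∈ (E.restrictScalars ℝ).map reP, reP (s v) = v)
    {B : V →ₗ[ℝ] V →ₗ[ℝ] ℝ} (hB : ∀ X ∈ Δ₀, ∀ Y, B X Y = -(εx (iV X) (s Y)).re) :
    Ksub (L.map (eB B)) = Δ₀.prod ((E.restrictScalars ℝ).map reP).dualAnnihilator := by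
  ext ⟨X, α⟩
  rw [mem_Ksub_iff, iT_mem_map_eB_iff, hL, Submodule.mem_prod, Submodule.mem_dualAnnihilator]
  constructor
  · rintro ⟨hXE, hγ⟩
    have hf : ∀ Y, iV Y ∈ E → (εx (iV X) (iV Y)).im = 0 := fun Y hY => by
      rw [← hγ _ hY, dualExt_iV, Complex.ofReal_im]
    have hX : X ∈ Δ₀ := (hΔ₀ X).2 ⟨hXE, hf⟩
    refine ⟨hX, fun Y hY => ?_⟩
    simpa [hB X hX] using (dualExt_eqOn_iff_of_section hf hsE hs _).1 hγ Y hY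
  · rintro ⟨hX, hα⟩
    obtain ⟨hXE, hf⟩ := (hΔ₀ X).1 hX
    refine ⟨hXE, (dualExt_eqOn_iff_of_section hf hsE hs _).2 fun Y hY => ?_⟩
    simp [hB X hX, hα Y hY]

end RealPoints

end CDirac

open CDirac Module

theorem stmt18_general (V : Type*) [AddCommGroup V] [Module ℝ V]
    (L : Submodule ℂ (TCx V))
    (E : Submodule ℂ (Cx V))
    (ε : ↥E →ₗ[ℂ] ↥E →ₗ[ℂ] ℂ) (halt : ∀ x : ↥E, ε x x = 0)
    (hchar : ∀ a : TCx V, a ∈ L ↔ ∃ h : a.1 ∈ E, ∀ y : ↥E, a.2 ↑y = ε ⟨a.1, h⟩ y)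
    (D : Submodule ℝ V) (hD : D = ((E ⊔ conjE E).restrictScalars ℝ).comap iV)
    (Δ₀ : Submodule ℝ V)
    (hΔ₀ : (Δ₀ : Set V) =
      {X : V | ∃ (h1 : iV X ∈ E) (_ : iV X ∈ conjE E),
        ∀ (Y : V) (g1 : iV Y ∈ E) (_ : iV Y ∈ conjE E),
          (ε ⟨iV X, h1⟩ ⟨iV Y, g1⟩).im = 0}) :
    ∃ B : V →ₗ[ℝ] V →ₗ[ℝ] ℝ, (∀ v : V, B v v = 0) ∧
      Ksub (L.map (eB B)) = Δ₀.prod D.dualAnnihilator := by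
  rw [comap_iV_sup_conjE] at hD
  subst hD
  obtain ⟨εx, hεx⟩ := LinearMap.exists_extend₂ ε
  have hΔ₀ : ∀ X, X ∈ Δ₀ ↔ iV X ∈ E ∧ ∀ Y, iV Y ∈ E → (εx (iV X) (iV Y)).im = 0 := by
    intro X
    rw [← SetLike.mem_coe, hΔ₀, Set.mem_ofPred_eq]
    refine ⟨fun ⟨hX, _, h⟩ => ⟨hX, fun Y hY => ?_⟩, fun ⟨hX, h⟩ => ⟨hX, iV_mem_conjE hX, ?_⟩⟩
    · rw [← h Y hY (iV_mem_conjE hY), ← hεx ⟨_, hX⟩ ⟨_, hY⟩]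
    · exact fun Y hY _ => by rw [← hεx ⟨_, hX⟩ ⟨_, hY⟩]; exact h Y hY
  obtain ⟨s, hsE, hs⟩ := exists_section_reP E
  set φ : V →ₗ[ℝ] V →ₗ[ℝ] ℝ := -((εx.restrictScalars₁₂ ℝ ℝ).compl₁₂ iV s).compr₂ Complex.reLm
  have hφ : ∀ X ∈ Δ₀, φ X X = 0 := by
    intro X hX
    obtain ⟨hXE, hf⟩ := (hΔ₀ X).1 hX
    have hXs : reP (s X) = reP (iV X) := by rw [hs X ⟨_, hXE, reP_iV X⟩, reP_iV]
    simp [φ, re_apply_eq_of_reP_eq hf (hsE X) hXE hXs, hεx ⟨_, hXE⟩ ⟨_, hXE⟩, halt]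
  obtain ⟨B, hBalt, hB⟩ := LinearMap.exists_isAlt_extension Δ₀ φ hφ
  exact ⟨B, hBalt, Ksub_map_eB_eq (iT_mem_iff_of_char hchar hεx) hΔ₀ hsE hs
    fun X hX Y => by simp [hB X hX, φ]⟩

/-- For a lagrangian `L = L(E,ε) ⊆ 𝕋_ℂV` there is a real two-form `B`
such that the real part `K'` of `e^B L ∩ conj(e^B L)` splits as
`K' = Δ₀ ⊕ Ann D ⊆ V ⊕ V^* = 𝕋V`. -/
theorem stmt18 (V : Type*) [AddCommGroup V] [Module ℝ V] [FiniteDimensional ℝ V]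
    (L : Submodule ℂ (TCx V)) (hL : IsLagrangianC L)
    (E : Submodule ℂ (Cx V)) (hE : E = Esub L)
    (ε : ↥E →ₗ[ℂ] ↥E →ₗ[ℂ] ℂ) (halt : ∀ x : ↥E, ε x x = 0)
    (hchar : ∀ a : TCx V, a ∈ L ↔ ∃ h : a.1 ∈ E, ∀ y : ↥E, a.2 ↑y = ε ⟨a.1, h⟩ y)
    (D : Submodule ℝ V) (hD : D = ((E ⊔ conjE E).restrictScalars ℝ).comap iV)
    (Δ₀ : Submodule ℝ V)
    (hΔ₀ : (Δ₀ : Set V) =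
      {X : V | ∃ (h1 : iV X ∈ E) (_ : iV X ∈ conjE E),
        ∀ (Y : V) (g1 : iV Y ∈ E) (_ : iV Y ∈ conjE E),
          (ε ⟨iV X, h1⟩ ⟨iV Y, g1⟩).im = 0}) :
    ∃ B : V →ₗ[ℝ] V →ₗ[ℝ] ℝ, (∀ v : V, B v v = 0) ∧
      Ksub (L.map (eB B)) = Δ₀.prod D.dualAnnihilator :=
  stmt18_general V L E ε halt hchar D hD Δ₀ hΔ₀
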